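/- Let M, N, N' be positive integers and let u be an integer invertible modulo M·N·N' with inverse ū modulo M·N·N'. Suppose γ ∈ SL₂(ℤ) satisfies γ ≡ [[u, 0], [0, ū]] (mod M·N·N') and γ ∈ Γ₀(M·N'). Then for every integer h, γ⁻¹ · [[1, h], [0, M]] · γ ≡ [[1, ū²h], [0, M]] (mod M·N·N') as 2×2 integer matrices (where γ⁻¹ denotes the adjugate-inverse in SL₂(ℤ)). -/
import Mathlib


theorem conjugation_matrix_congruence (M N N' : ℕ) (hM : 0 < M) (hN : 0 < N)
    (hN' : 0 < N') (u ubar : ℤ) (huv : u * ubar ≡ 1 [ZMOD ((M : ℤ) * N * N')])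
    (γ : Matrix.SpecialLinearGroup (Fin 2) ℤ)
    (hγ0 : (γ : Matrix (Fin 2) (Fin 2) ℤ) 1 0 ≡ 0 [ZMOD ((M : ℤ) * N')])
    (hγ : ∀ i j, ((γ : Matrix (Fin 2) (Fin 2) ℤ) i j : ZMod (M * N * N'))
      = ((!![u, 0; 0, ubar] : Matrix (Fin 2) (Fin 2) ℤ) i j : ZMod (M * N * N')))
    (h : ℤ) :
    ∀ i j, ((((γ⁻¹ : Matrix.SpecialLinearGroup (Fin 2) ℤ) : Matrix (Fin 2) (Fin 2) ℤ)
        * !![1, h; 0, (M : ℤ)] * (γ : Matrix (Fin 2) (Fin 2) ℤ)) i j : ZMod (M * N * N'))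
      = ((!![1, ubar ^ 2 * h; 0, (M : ℤ)] : Matrix (Fin 2) (Fin 2) ℤ) i j
          : ZMod (M * N * N')) := by
  have key : ((u : ZMod (M * N * N')) * (ubar : ZMod (M * N * N'))) = 1 := by
    have : ((u * ubar : ℤ) : ZMod (M * N * N')) = ((1 : ℤ) : ZMod (M * N * N')) := by
      rw [ZMod.intCast_eq_intCast_iff]
      have e : ((M * N * N' : ℕ) : ℤ) = (M : ℤ) * N * N' := by push_cast; ring
      rw [e]; exact huv
    push_cast at this
    simpa using this
  have ha := hγ 0 0
  have hb := hγ 0 1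
  have hc := hγ 1 0
  have hd := hγ 1 1
  simp [Matrix.cons_val_zero, Matrix.cons_val_one] at ha hb hc hd
  intro i j
  rw [Matrix.SpecialLinearGroup.coe_inv, Matrix.adjugate_fin_two]
  fin_cases i <;> fin_cases j <;>
    simp [Matrix.mul_apply, Fin.sum_univ_succ] <;> push_cast <;>
    simp only [ha, hb, hc, hd] <;> ring_nf <;>
    simp [mul_comm, key] <;> ring_nf
  rw [mul_comm ((ubar : ZMod (M * N * N'))) ((u : ZMod (M * N * N'))), key, one_mul]
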